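/- Per-step unconditional stability of the Backward Euler scheme (abstract form of the stability estimate recalled from [BCG15]). Assume given u₀, u₁ ∈ V, p ∈ Q, X₋, X₀, X₁ ∈ S, λ ∈ Λ and w ∈ S, and write F_j = G_s X_j for j ∈ {−, 0, 1}. Assume: (i) ρ_f ⟨(u₁ − u₀)/Δt, u₁⟩ + b(u₁, u₁, u₁) + ν‖G u₁‖² − ⟨d u₁, p⟩ + c(λ, w) = 0; (ii) ⟨d u₁, q⟩ = 0 for all q ∈ Q; (iii) δρ ⟨(X₁ − 2X₀ + X₋)/Δt², Y⟩ + ⟨P(F₁), G_s Y⟩ − c(λ, Y) = 0 for all Y ∈ S; (iv) c(μ, w − (X₁ − X₀)/Δt) = 0 for all μ ∈ Λ. Then (ρ_f/(2Δt))(‖u₁‖² − ‖u₀‖²) + ν‖G u₁‖² + (W(F₁) − W(F₀))/Δt + (δρ/(2Δt))(‖(X₁ − X₀)/Δt‖² − ‖(X₀ − X₋)/Δt‖²) ≤ 0. -/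

import Mathlib

/-! Test the momentum equation with `u₁` and the structure equation with the discrete velocity
`(X₁ - X₀)/Δt`; the kinematic constraint makes the two coupling terms cancel, the convection and
pressure terms vanish, and each backward difference `⟪a - b, a⟫` dominates `(‖a‖² - ‖b‖²)/2`,
while convexity bounds the increment of the elastic energy by `⟪P(F₁), F₁ - F₀⟫`. -/

open scoped RealInnerProductSpace

theorem ConvexOn.le_sub_of_hasFDerivAt {E : Type*} [NormedAddCommGroup E] [NormedSpace ℝ E]
    {s : Set E} {f : E → ℝ} {f' : E →L[ℝ] ℝ} {x y : E} (hf : ConvexOn ℝ s f)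
    (hx : x ∈ s) (hy : y ∈ s) (hf' : HasFDerivAt f f' x) : f' (y - x) ≤ f y - f x := by
  let ℓ : ℝ →ᵃ[ℝ] E := AffineMap.lineMap x y
  have hconv : ConvexOn ℝ (ℓ ⁻¹' s) (f ∘ ℓ) := hf.comp_affineMap ℓ
  have hderiv : HasDerivAt (f ∘ ℓ) (f' (y - x)) 0 := by
    have hf'0 : HasFDerivAt f f' (ℓ 0) := by simpa [ℓ] using hf'
    exact hf'0.comp_hasDerivAt 0 AffineMap.hasDerivAt_lineMap
  have := hconv.le_slope_of_hasDerivAt (by simpa [ℓ]) (by simpa [ℓ]) zero_lt_one hderiv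
  simpa [ℓ, slope_def_field] using this

theorem ConvexOn.sub_div_le_of_hasFDerivAt {E : Type*} [NormedAddCommGroup E] [NormedSpace ℝ E]
    {s : Set E} {f : E → ℝ} {f' : E →L[ℝ] ℝ} {x y : E} {h : ℝ} (hf : ConvexOn ℝ s f)
    (hx : x ∈ s) (hy : y ∈ s) (hf' : HasFDerivAt f f' y) (hh : 0 ≤ h) :
    (f y - f x) / h ≤ f' (h⁻¹ • (y - x)) := by
  have hslope : f y - f x ≤ f' (y - x) := by
    have := hf.le_sub_of_hasFDerivAt hy hx hf'
    rw [← neg_sub y x, map_neg] at this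
    linarith
  rw [map_smul, smul_eq_mul, div_eq_inv_mul]
  exact mul_le_mul_of_nonneg_left hslope (inv_nonneg.mpr hh)

theorem norm_sq_sub_norm_sq_le_two_mul_inner_sub {E : Type*} [NormedAddCommGroup E]
    [InnerProductSpace ℝ E] (a b : E) : ‖a‖ ^ 2 - ‖b‖ ^ 2 ≤ 2 * ⟪a - b, a⟫ := by
  have hb := norm_sub_sq_real a (a - b)
  rw [sub_sub_cancel, real_inner_comm] at hb
  nlinarith [sq_nonneg ‖a - b‖]

theorem mul_div_two_mul_sub_norm_sq_le_inner {E : Type*} [NormedAddCommGroup E]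
    [InnerProductSpace ℝ E] (a b : E) {κ h : ℝ} (hκ : 0 ≤ κ) (hh : 0 ≤ h) :
    κ / (2 * h) * (‖a‖ ^ 2 - ‖b‖ ^ 2) ≤ κ * ⟪h⁻¹ • (a - b), a⟫ := by
  have hscale : κ / (2 * h) * (‖a‖ ^ 2 - ‖b‖ ^ 2) = κ * h⁻¹ / 2 * (‖a‖ ^ 2 - ‖b‖ ^ 2) := by
    rw [mul_comm 2 h, ← div_div, div_eq_mul_inv κ h]
  rw [hscale, real_inner_smul_left, ← mul_assoc]
  have := mul_le_mul_of_nonneg_left (norm_sq_sub_norm_sq_le_two_mul_inner_sub a b)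
    (mul_nonneg hκ (inv_nonneg.mpr hh))
  linarith

theorem backward_euler_per_step_stability_general
    {V Q S M N Λ : Type*}
    [NormedAddCommGroup V] [InnerProductSpace ℝ V]
    [NormedAddCommGroup Q] [InnerProductSpace ℝ Q]
    [NormedAddCommGroup S] [InnerProductSpace ℝ S]
    [NormedAddCommGroup M] [InnerProductSpace ℝ M]
    [NormedAddCommGroup N] [InnerProductSpace ℝ N]
    [NormedAddCommGroup Λ] [InnerProductSpace ℝ Λ]
    (G : V →ₗ[ℝ] M) (d : V →ₗ[ℝ] Q) (Gs : S →ₗ[ℝ] N)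
    (c : Λ →ₗ[ℝ] S →ₗ[ℝ] ℝ) (b : V →ₗ[ℝ] V →ₗ[ℝ] V →ₗ[ℝ] ℝ)
    (hb : ∀ v w : V, b v w w = 0)
    (ρf δρ ν Δt : ℝ)
    (hρf : 0 ≤ ρf) (hδρ : 0 ≤ δρ) (hΔt : 0 < Δt)
    (W : N → ℝ) (hW : ConvexOn ℝ Set.univ W)
    (DW : N → N →L[ℝ] ℝ) (hDW : ∀ F : N, HasFDerivAt W (DW F) F)
    (P : N → N) (hP : ∀ F H : N, ⟪P F, H⟫ = DW F H)
    (u₀ u₁ : V) (p : Q) (Xm X₀ X₁ : S) (lam : Λ) (w : S)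
    (h1 : ρf * ⟪Δt⁻¹ • (u₁ - u₀), u₁⟫ + b u₁ u₁ u₁ + ν * ‖G u₁‖ ^ 2
        - ⟪d u₁, p⟫ + c lam w = 0)
    (h2 : ∀ q : Q, ⟪d u₁, q⟫ = 0)
    (h3 : ∀ Y : S, δρ * ⟪(Δt ^ 2)⁻¹ • (X₁ - (2 : ℝ) • X₀ + Xm), Y⟫
        + ⟪P (Gs X₁), Gs Y⟫ - c lam Y = 0)
    (h4 : ∀ μ : Λ, c μ (w - Δt⁻¹ • (X₁ - X₀)) = 0) :
    (ρf / (2 * Δt)) * (‖u₁‖ ^ 2 - ‖u₀‖ ^ 2) + ν * ‖G u₁‖ ^ 2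
      + (W (Gs X₁) - W (Gs X₀)) / Δt
      + (δρ / (2 * Δt)) * (‖Δt⁻¹ • (X₁ - X₀)‖ ^ 2 - ‖Δt⁻¹ • (X₀ - Xm)‖ ^ 2) ≤ 0 := by
  set v₁ : S := Δt⁻¹ • (X₁ - X₀)
  set v₀ : S := Δt⁻¹ • (X₀ - Xm)
  have haccel : (Δt ^ 2)⁻¹ • (X₁ - (2 : ℝ) • X₀ + Xm) = Δt⁻¹ • (v₁ - v₀) := by
    rw [← smul_sub, smul_smul, ← sq, inv_pow]
    congr 1
    module
  have hcoupling : c lam w = c lam v₁ := by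
    simpa [sub_eq_zero] using h4 lam
  have hfluid := mul_div_two_mul_sub_norm_sq_le_inner u₁ u₀ hρf hΔt.le
  have hsolid := mul_div_two_mul_sub_norm_sq_le_inner v₁ v₀ hδρ hΔt.le
  have helastic : (W (Gs X₁) - W (Gs X₀)) / Δt ≤ ⟪P (Gs X₁), Gs v₁⟫ := by
    rw [hP, map_smul, map_sub]
    exact hW.sub_div_le_of_hasFDerivAt trivial trivial (hDW _) hΔt.le
  have hstructure := h3 v₁
  rw [haccel] at hstructure
  rw [hb, h2] at h1
  linarith

theorem backward_euler_per_step_stability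
    {V Q S M N Λ : Type*}
    [NormedAddCommGroup V] [InnerProductSpace ℝ V]
    [NormedAddCommGroup Q] [InnerProductSpace ℝ Q]
    [NormedAddCommGroup S] [InnerProductSpace ℝ S]
    [NormedAddCommGroup M] [InnerProductSpace ℝ M]
    [NormedAddCommGroup N] [InnerProductSpace ℝ N]
    [NormedAddCommGroup Λ] [InnerProductSpace ℝ Λ]
    (G : V →ₗ[ℝ] M) (d : V →ₗ[ℝ] Q) (Gs : S →ₗ[ℝ] N)
    (c : Λ →ₗ[ℝ] S →ₗ[ℝ] ℝ) (b : V →ₗ[ℝ] V →ₗ[ℝ] V →ₗ[ℝ] ℝ)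
    (hb : ∀ v w : V, b v w w = 0)
    (ρf δρ ν Δt : ℝ)
    (hρf : 0 ≤ ρf) (hδρ : 0 ≤ δρ) (hν : 0 ≤ ν) (hΔt : 0 < Δt)
    (W : N → ℝ) (hW : ConvexOn ℝ Set.univ W)
    (DW : N → N →L[ℝ] ℝ) (hDW : ∀ F : N, HasFDerivAt W (DW F) F)
    (P : N → N) (hP : ∀ F H : N, ⟪P F, H⟫ = DW F H)
    (u₀ u₁ : V) (p : Q) (Xm X₀ X₁ : S) (lam : Λ) (w : S)
    (h1 : ρf * ⟪Δt⁻¹ • (u₁ - u₀), u₁⟫ + b u₁ u₁ u₁ + ν * ‖G u₁‖ ^ 2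
        - ⟪d u₁, p⟫ + c lam w = 0)
    (h2 : ∀ q : Q, ⟪d u₁, q⟫ = 0)
    (h3 : ∀ Y : S, δρ * ⟪(Δt ^ 2)⁻¹ • (X₁ - (2 : ℝ) • X₀ + Xm), Y⟫
        + ⟪P (Gs X₁), Gs Y⟫ - c lam Y = 0)
    (h4 : ∀ μ : Λ, c μ (w - Δt⁻¹ • (X₁ - X₀)) = 0) :
    (ρf / (2 * Δt)) * (‖u₁‖ ^ 2 - ‖u₀‖ ^ 2) + ν * ‖G u₁‖ ^ 2
      + (W (Gs X₁) - W (Gs X₀)) / Δt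
      + (δρ / (2 * Δt)) * (‖Δt⁻¹ • (X₁ - X₀)‖ ^ 2 - ‖Δt⁻¹ • (X₀ - Xm)‖ ^ 2) ≤ 0 :=
  backward_euler_per_step_stability_general G d Gs c b hb ρf δρ ν Δt hρf hδρ hΔt W hW DW hDW P hP u₀
    u₁ p Xm X₀ X₁ lam w h1 h2 h3 h4
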